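/- arXiv:0903.4769 — 2 statements merged into one kernel-verified Lean document; each statement's English description precedes it below -/
import Mathlib

section
/- Let C : H_C⊕...⊕H_C → H_C and A : H_A⊕...⊕H_A → H_A (d summands each) be row contractions, let D_C = (1 - C*C)^{1/2} on ⨁^d H_C, D_{*,A} = (1 - A A*)^{1/2} on H_A, with defect spaces 𝒟_C = closure(range D_C) and 𝒟_{*,A} = closure(range D_{*,A}). Let γ : 𝒟_{*,A} → 𝒟_C be a contraction and define B* := D_C* γ D_{*,A} : H_A → ⨁^d H_C (where D_C* denotes D_C followed by inclusion). Then the row operator E with components E_i = [[C_i, 0], [B_i, A_i]] on H_C ⊕ H_A is a row contraction, i.e., E E* ≤ 1. -/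
/-!
The defect identities `D_C² + C*C = 1` and `D_{*,A}² + AA* = 1` say that the column `(D_C, C)`
is an isometry and the row `(D_{*,A}, A)` a coisometry, hence a contraction. Moreover `B*`
factors as `D_{*,A} T D_C` with `T = ι γ* π` a contraction, `ι` the inclusion of `𝒟_{*,A}` and
`π` the orthogonal projection onto `𝒟_C`. Hence
`‖B x + A y‖² ≤ ‖T D_C x‖² + ‖y‖² ≤ ‖D_C x‖² + ‖y‖² = ‖x‖² - ‖C x‖² + ‖y‖²`.
-/

instance PiLp.instCompleteSpace' {ι : Type*} (p : ENNReal) (α : ι → Type*)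
    [∀ i, UniformSpace (α i)] [∀ i, CompleteSpace (α i)] : CompleteSpace (PiLp p α) :=
  PiLp.completeSpace p α

open ContinuousLinearMap

section

variable {𝕜 E F G V W : Type*} [RCLike 𝕜]
  [NormedAddCommGroup E] [InnerProductSpace 𝕜 E] [CompleteSpace E]
  [NormedAddCommGroup F] [InnerProductSpace 𝕜 F] [CompleteSpace F]
  [NormedAddCommGroup G] [InnerProductSpace 𝕜 G] [CompleteSpace G]
  [NormedAddCommGroup V] [InnerProductSpace 𝕜 V] [CompleteSpace V]
  [NormedAddCommGroup W] [InnerProductSpace 𝕜 W] [CompleteSpace W]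

theorem ContinuousLinearMap.adjoint_codRestrict (T : E →L[𝕜] F) (p : Submodule 𝕜 F)
    [CompleteSpace p] (h : ∀ x, T x ∈ p) :
    adjoint (T.codRestrict p h) = adjoint T ∘L p.subtypeL := by
  symm
  rw [eq_adjoint_iff]
  intro u w
  rw [comp_apply, adjoint_inner_left, Submodule.coe_inner]
  rfl

theorem norm_sq_add_norm_sq_of_adjoint_comp_add_eq_one (T : E →L[𝕜] F) (S : E →L[𝕜] G)
    (h : adjoint T ∘L T + adjoint S ∘L S = 1) (x : E) :
    ‖T x‖ ^ 2 + ‖S x‖ ^ 2 = ‖x‖ ^ 2 := by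
  rw [apply_norm_sq_eq_inner_adjoint_right, apply_norm_sq_eq_inner_adjoint_right, ← map_add,
    ← inner_add_right, ← add_apply, h, one_apply_eq_self, inner_self_eq_norm_sq]

theorem norm_add_sq_le_of_comp_adjoint_add_eq_one (D : E →L[𝕜] G) (A : F →L[𝕜] G)
    (h : D ∘L adjoint D + A ∘L adjoint A = 1) (v : E) (y : F) :
    ‖D v + A y‖ ^ 2 ≤ ‖v‖ ^ 2 + ‖y‖ ^ 2 := by
  set w := D v + A y
  have hw : ‖adjoint D w‖ ^ 2 + ‖adjoint A w‖ ^ 2 = ‖w‖ ^ 2 :=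
    norm_sq_add_norm_sq_of_adjoint_comp_add_eq_one _ _ (by simpa only [adjoint_adjoint]) w
  have hpair : ‖w‖ ^ 2 ≤ ‖v‖ * ‖adjoint D w‖ + ‖y‖ * ‖adjoint A w‖ :=
    calc ‖w‖ ^ 2
        = RCLike.re (inner 𝕜 v (adjoint D w)) + RCLike.re (inner 𝕜 y (adjoint A w)) := by
          rw [← inner_self_eq_norm_sq (𝕜 := 𝕜), ← map_add, adjoint_inner_right,
            adjoint_inner_right, ← inner_add_left]
      _ ≤ ‖v‖ * ‖adjoint D w‖ + ‖y‖ * ‖adjoint A w‖ :=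
          add_le_add (re_inner_le_norm _ _) (re_inner_le_norm _ _)
  -- Cauchy–Schwarz in `ℝ²` turns `hpair` into `‖w‖⁴ ≤ (‖v‖² + ‖y‖²) ‖w‖²`.
  nlinarith [sq_nonneg (‖v‖ * ‖adjoint A w‖ - ‖y‖ * ‖adjoint D w‖), sq_nonneg ‖w‖,
    sq_nonneg (‖v‖ * ‖adjoint D w‖ + ‖y‖ * ‖adjoint A w‖)]

theorem norm_sq_add_norm_sq_le_of_defect_factorization
    (C : E →L[𝕜] F) (DC : E →L[𝕜] E) (hDC : adjoint DC ∘L DC + adjoint C ∘L C = 1)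
    (A : G →L[𝕜] W) (D : V →L[𝕜] W) (hD : D ∘L adjoint D + A ∘L adjoint A = 1)
    (T : E →L[𝕜] V) (hT : ‖T‖ ≤ 1) (x : E) (y : G) :
    ‖C x‖ ^ 2 + ‖D (T (DC x)) + A y‖ ^ 2 ≤ ‖x‖ ^ 2 + ‖y‖ ^ 2 := by
  have hrow := norm_add_sq_le_of_comp_adjoint_add_eq_one D A hD (T (DC x)) y
  have hcol := norm_sq_add_norm_sq_of_adjoint_comp_add_eq_one DC C hDC x
  have hTx : ‖T (DC x)‖ ^ 2 ≤ ‖DC x‖ ^ 2 := by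
    gcongr
    simpa only [one_mul] using T.le_of_opNorm_le hT (DC x)
  linarith

end

theorem stmt_4_general {HC HA : Type*}
    [NormedAddCommGroup HC] [InnerProductSpace ℂ HC] [CompleteSpace HC]
    [NormedAddCommGroup HA] [InnerProductSpace ℂ HA] [CompleteSpace HA]
    (d : ℕ)
    (C : PiLp 2 (fun _ : Fin d => HC) →L[ℂ] HC)
    (A : PiLp 2 (fun _ : Fin d => HA) →L[ℂ] HA)
    (DC : PiLp 2 (fun _ : Fin d => HC) →L[ℂ] PiLp 2 (fun _ : Fin d => HC))
    (DsA : HA →L[ℂ] HA)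
    (hDC_pos : DC.IsPositive) (hDsA_pos : DsA.IsPositive)
    (hDC : DC ∘L DC = 1 - ContinuousLinearMap.adjoint C ∘L C)
    (hDsA : DsA ∘L DsA = 1 - A ∘L ContinuousLinearMap.adjoint A)
    (γ : (LinearMap.range DsA.toLinearMap).topologicalClosure →L[ℂ]
      (LinearMap.range DC.toLinearMap).topologicalClosure)
    (hγ : ‖γ‖ ≤ 1) :
    ∀ (x : PiLp 2 (fun _ : Fin d => HC)) (y : PiLp 2 (fun _ : Fin d => HA)),
      ‖C x‖ ^ 2 +
        ‖(ContinuousLinearMap.adjoint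
            (DC ∘L ((LinearMap.range DC.toLinearMap).topologicalClosure.subtypeL ∘L
              (γ ∘L DsA.codRestrict (LinearMap.range DsA.toLinearMap).topologicalClosure
                (fun z =>
                  Submodule.le_topologicalClosure _ (LinearMap.mem_range_self DsA.toLinearMap z)))))) x
          + A y‖ ^ 2
        ≤ ‖x‖ ^ 2 + ‖y‖ ^ 2 := by
  intro x y
  set ι := (LinearMap.range DsA.toLinearMap).topologicalClosure.subtypeL
  set π := adjoint (LinearMap.range DC.toLinearMap).topologicalClosure.subtypeL
  have hT : ‖ι ∘L adjoint γ ∘L π‖ ≤ 1 := by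
    have hι : ‖ι‖ ≤ 1 := Submodule.norm_subtypeL_le _
    have hγ' : ‖adjoint γ‖ ≤ 1 := (adjoint.norm_map γ).trans_le hγ
    have hπ : ‖π‖ ≤ 1 := (adjoint.norm_map _).trans_le (Submodule.norm_subtypeL_le _)
    calc ‖ι ∘L adjoint γ ∘L π‖ ≤ ‖ι‖ * (‖adjoint γ‖ * ‖π‖) :=
          (opNorm_comp_le _ _).trans (by gcongr; exact opNorm_comp_le _ _)
      _ ≤ 1 := mul_le_one₀ hι (by positivity) (mul_le_one₀ hγ' (by positivity) hπ)
  simp only [adjoint_comp, adjoint_codRestrict, hDC_pos.isSelfAdjoint.adjoint_eq,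
    hDsA_pos.isSelfAdjoint.adjoint_eq, comp_apply]
  exact norm_sq_add_norm_sq_le_of_defect_factorization C DC
    (by rw [hDC_pos.isSelfAdjoint.adjoint_eq, hDC, sub_add_cancel]) A DsA
    (by rw [hDsA_pos.isSelfAdjoint.adjoint_eq, hDsA, sub_add_cancel]) _ hT x y

/-- Let `C`, `A` be row contractions with defect operators `D_C`, `D_{*,A}`,
let `γ : 𝒟_{*,A} → 𝒟_C` be a contraction between the defect spaces, and set
`B* := D_C ∘ (inclusion) ∘ γ ∘ D_{*,A} : H_A → ⨁^d H_C`.  Then the row operator `E` with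
components `E_i = [[C_i, 0], [B_i, A_i]]` is a row contraction, i.e. for all
`x ∈ ⨁^d H_C`, `y ∈ ⨁^d H_A` we have `‖C x‖² + ‖B x + A y‖² ≤ ‖x‖² + ‖y‖²`. -/
theorem stmt_4 {HC HA : Type*}
    [NormedAddCommGroup HC] [InnerProductSpace ℂ HC] [CompleteSpace HC]
    [NormedAddCommGroup HA] [InnerProductSpace ℂ HA] [CompleteSpace HA]
    (d : ℕ) (hd : 1 ≤ d)
    (C : PiLp 2 (fun _ : Fin d => HC) →L[ℂ] HC) (hCc : ‖C‖ ≤ 1)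
    (A : PiLp 2 (fun _ : Fin d => HA) →L[ℂ] HA) (hAc : ‖A‖ ≤ 1)
    (DC : PiLp 2 (fun _ : Fin d => HC) →L[ℂ] PiLp 2 (fun _ : Fin d => HC))
    (DsA : HA →L[ℂ] HA)
    (hDC_pos : DC.IsPositive) (hDsA_pos : DsA.IsPositive)
    (hDC : DC ∘L DC = 1 - ContinuousLinearMap.adjoint C ∘L C)
    (hDsA : DsA ∘L DsA = 1 - A ∘L ContinuousLinearMap.adjoint A)
    (γ : (LinearMap.range DsA.toLinearMap).topologicalClosure →L[ℂ]
      (LinearMap.range DC.toLinearMap).topologicalClosure)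
    (hγ : ‖γ‖ ≤ 1) :
    ∀ (x : PiLp 2 (fun _ : Fin d => HC)) (y : PiLp 2 (fun _ : Fin d => HA)),
      ‖C x‖ ^ 2 +
        ‖(ContinuousLinearMap.adjoint
            (DC ∘L ((LinearMap.range DC.toLinearMap).topologicalClosure.subtypeL ∘L
              (γ ∘L DsA.codRestrict (LinearMap.range DsA.toLinearMap).topologicalClosure
                (fun z =>
                  Submodule.le_topologicalClosure _ (LinearMap.mem_range_self DsA.toLinearMap z)))))) x
          + A y‖ ^ 2
        ≤ ‖x‖ ^ 2 + ‖y‖ ^ 2 :=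
  stmt_4_general d C A DC DsA hDC_pos hDsA_pos hDC hDsA γ hγ
end

section
/- Let H = ℂ³, A₁ = (1/√2)·[[0,0,0],[1,0,0],[0,1,1]], A₂ = (1/√2)·[[1,1,0],[0,0,1],[0,0,0]]. Then A₁A₁* + A₂A₂* = 1, the unit vector Ω = (1/√3)(1,1,1)ᵀ satisfies A_i* Ω = (1/√2) Ω for i = 1,2, and with Q the orthogonal projection onto Ω^⊥ and Å_i = A_i Q, one has ∑_{|α|=n} Å_α Å_α* = (1/(3·2^{n-1}))·[[1,-1,0],[-1,2,-1],[0,-1,1]] for all n ≥ 1; in particular ∑_{|α|=n} Å_α Å_α* → 0 as n → ∞. -/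
open scoped Matrix
/-- For a word `α = (α₀, …, α_{n-1})` over `{1, 2}`, the matrix product
`A_α = A_{α₀} ⋯ A_{α_{n-1}}`. -/
noncomputable def matWord (A : Fin 2 → Matrix (Fin 3) (Fin 3) ℂ) :
    (n : ℕ) → (Fin n → Fin 2) → Matrix (Fin 3) (Fin 3) ℂ
  | 0, _ => 1
  | n + 1, α => A (α 0) * matWord A n (fun i => α i.succ)

lemma matWord_cons (A : Fin 2 → Matrix (Fin 3) (Fin 3) ℂ) (n : ℕ) (i : Fin 2)
    (β : Fin n → Fin 2) :
    matWord A (n + 1) (Fin.cons i β) = A i * matWord A n β := by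
  simp [matWord]

lemma sum_word_rec (A : Fin 2 → Matrix (Fin 3) (Fin 3) ℂ) (n : ℕ) :
    ∑ α : Fin (n + 1) → Fin 2, matWord A (n + 1) α * (matWord A (n + 1) α)ᴴ =
      ∑ i : Fin 2, A i * (∑ β : Fin n → Fin 2, matWord A n β * (matWord A n β)ᴴ) * (A i)ᴴ := by
  rw [← Fintype.sum_equiv (Fin.consEquiv (fun _ : Fin (n + 1) => Fin 2))
      (fun p : Fin 2 × (Fin n → Fin 2) =>
        matWord A (n + 1) (Fin.cons p.1 p.2) * (matWord A (n + 1) (Fin.cons p.1 p.2))ᴴ)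
      (fun α => matWord A (n + 1) α * (matWord A (n + 1) α)ᴴ)
      (fun p => rfl)]
  rw [Fintype.sum_prod_type]
  refine Finset.sum_congr rfl fun i _ => ?_
  rw [Finset.mul_sum, Finset.sum_mul]
  refine Finset.sum_congr rfl fun β _ => ?_
  rw [matWord_cons, Matrix.conjTranspose_mul, mul_assoc, mul_assoc, mul_assoc]

/-- For the explicit matrices `A₁, A₂` one has `A₁A₁* + A₂A₂* = 1`,
the unit vector `Ω = 3^{-1/2}(1,1,1)ᵀ` satisfies `A_i* Ω = 2^{-1/2} Ω`, and with `Q` the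
orthogonal projection onto `Ω^⊥` and `Å_i = A_i Q`,
`∑_{|α|=n} Å_α Å_α* = (3·2^{n-1})⁻¹ [[1,-1,0],[-1,2,-1],[0,-1,1]]` for all `n ≥ 1`; in
particular `∑_{|α|=n} Å_α Å_α* → 0` as `n → ∞`. -/
theorem stmt_13
    (A : Fin 2 → Matrix (Fin 3) (Fin 3) ℂ)
    (hA1 : A 0 = ((Real.sqrt 2 : ℂ))⁻¹ • !![0, 0, 0; 1, 0, 0; 0, 1, 1])
    (hA2 : A 1 = ((Real.sqrt 2 : ℂ))⁻¹ • !![1, 1, 0; 0, 0, 1; 0, 0, 0])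
    (Ω : Fin 3 → ℂ) (hΩ : Ω = ((Real.sqrt 3 : ℂ))⁻¹ • ![1, 1, 1])
    (Q : Matrix (Fin 3) (Fin 3) ℂ)
    (hQ : Q = (3 : ℂ)⁻¹ • !![2, -1, -1; -1, 2, -1; -1, -1, 2]) :
    (A 0 * (A 0)ᴴ + A 1 * (A 1)ᴴ = 1) ∧
    (∀ i, (A i)ᴴ *ᵥ Ω = ((Real.sqrt 2 : ℂ))⁻¹ • Ω) ∧
    (∀ n : ℕ, 1 ≤ n →
      ∑ α : Fin n → Fin 2,
          matWord (fun i => A i * Q) n α * (matWord (fun i => A i * Q) n α)ᴴ =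
        ((3 * 2 ^ (n - 1) : ℂ))⁻¹ • !![1, -1, 0; -1, 2, -1; 0, -1, 1]) ∧
    Filter.Tendsto
      (fun n : ℕ => ∑ α : Fin n → Fin 2,
        matWord (fun i => A i * Q) n α * (matWord (fun i => A i * Q) n α)ᴴ)
      Filter.atTop (nhds 0) := by
  have hs2 : (Real.sqrt 2 : ℂ) * (Real.sqrt 2 : ℂ) = 2 := by
    rw [← Complex.ofReal_mul, Real.mul_self_sqrt (by norm_num)]; norm_num
  have hs2' : ((Real.sqrt 2 : ℂ))⁻¹ * ((Real.sqrt 2 : ℂ))⁻¹ = 2⁻¹ := by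
    rw [← mul_inv, hs2]
  have hstar2 : star ((Real.sqrt 2 : ℂ))⁻¹ = ((Real.sqrt 2 : ℂ))⁻¹ := by
    rw [star_inv₀, RCLike.star_def, Complex.conj_ofReal]
  -- conjTranspose of the two building-block matrices
  have hT0 : (!![(0:ℂ), 0, 0; 1, 0, 0; 0, 1, 1])ᴴ = !![0, 1, 0; 0, 0, 1; 0, 0, 1] := by
    ext i j; fin_cases i <;> fin_cases j <;>
      simp [Matrix.conjTranspose_apply, Matrix.vecHead, Matrix.vecTail]
  have hT1 : (!![(1:ℂ), 1, 0; 0, 0, 1; 0, 0, 0])ᴴ = !![1, 0, 0; 1, 0, 0; 0, 1, 0] := by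
    ext i j; fin_cases i <;> fin_cases j <;>
      simp [Matrix.conjTranspose_apply, Matrix.vecHead, Matrix.vecTail]
  -- Part 1
  have part1 : A 0 * (A 0)ᴴ + A 1 * (A 1)ᴴ = 1 := by
    rw [hA1, hA2, Matrix.conjTranspose_smul, Matrix.conjTranspose_smul, hstar2, hT0, hT1]
    rw [smul_mul_smul_comm, smul_mul_smul_comm, hs2', ← smul_add]
    have : (!![(0:ℂ), 0, 0; 1, 0, 0; 0, 1, 1]) * !![0, 1, 0; 0, 0, 1; 0, 0, 1] +
        (!![(1:ℂ), 1, 0; 0, 0, 1; 0, 0, 0]) * !![1, 0, 0; 1, 0, 0; 0, 1, 0] = (2 : ℂ) • 1 := by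
      have h1 : (1 : Matrix (Fin 3) (Fin 3) ℂ) = !![1,0,0;0,1,0;0,0,1] := by
        ext i j; fin_cases i <;> fin_cases j <;>
          simp [Matrix.one_apply, Matrix.vecHead, Matrix.vecTail]
      rw [h1]
      norm_num [Matrix.mul_fin_three, Matrix.smul_of, Matrix.smul_cons, Matrix.smul_empty]
    rw [this, smul_smul]; norm_num
  -- Part 2
  have p0 : (A 0)ᴴ *ᵥ Ω = ((Real.sqrt 2 : ℂ))⁻¹ • Ω := by
    rw [hA1, Matrix.conjTranspose_smul, hstar2, hT0, hΩ]
    funext j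
    fin_cases j <;>
      simp [Matrix.mulVec, dotProduct, Fin.sum_univ_three,
        Matrix.vecHead, Matrix.vecTail, Matrix.smul_apply] <;> ring
  have p1 : (A 1)ᴴ *ᵥ Ω = ((Real.sqrt 2 : ℂ))⁻¹ • Ω := by
    rw [hA2, Matrix.conjTranspose_smul, hstar2, hT1, hΩ]
    funext j
    fin_cases j <;>
      simp [Matrix.mulVec, dotProduct, Fin.sum_univ_three,
        Matrix.vecHead, Matrix.vecTail, Matrix.smul_apply] <;> ring
  have part2 : ∀ i, (A i)ᴴ *ᵥ Ω = ((Real.sqrt 2 : ℂ))⁻¹ • Ω := by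
    intro i
    fin_cases i
    · exact p0
    · exact p1
  -- Part 3: the building blocks Å i = A i * Q
  set M : Matrix (Fin 3) (Fin 3) ℂ := !![1, -1, 0; -1, 2, -1; 0, -1, 1] with hM
  set c : ℂ := ((Real.sqrt 2 : ℂ))⁻¹ * (3 : ℂ)⁻¹ with hc
  have hstarc : star c = c := by rw [hc, star_mul', hstar2]; norm_num
  have hB0 : A 0 * Q = c • !![(0:ℂ), 0, 0; 2, -1, -1; -2, 1, 1] := by
    rw [hA1, hQ, smul_mul_smul_comm, ← hc]
    congr 1
    ext i j; fin_cases i <;> fin_cases j <;>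
      simp [Matrix.mul_apply, Fin.sum_univ_three, Matrix.vecHead, Matrix.vecTail] <;> ring
  have hB1 : A 1 * Q = c • !![(1:ℂ), 1, -2; -1, -1, 2; 0, 0, 0] := by
    rw [hA2, hQ, smul_mul_smul_comm, ← hc]
    congr 1
    ext i j; fin_cases i <;> fin_cases j <;>
      simp [Matrix.mul_apply, Fin.sum_univ_three, Matrix.vecHead, Matrix.vecTail] <;> ring
  have hCT0 : (!![(0:ℂ), 0, 0; 2, -1, -1; -2, 1, 1])ᴴ = !![0, 2, -2; 0, -1, 1; 0, -1, 1] := by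
    ext i j; fin_cases i <;> fin_cases j <;>
      simp [Matrix.conjTranspose_apply, Matrix.vecHead, Matrix.vecTail]
  have hCT1 : (!![(1:ℂ), 1, -2; -1, -1, 2; 0, 0, 0])ᴴ = !![1, -1, 0; 1, -1, 0; -2, 2, 0] := by
    ext i j; fin_cases i <;> fin_cases j <;>
      simp [Matrix.conjTranspose_apply, Matrix.vecHead, Matrix.vecTail]
  have hcc : c * c = 18⁻¹ := by
    rw [hc, show ((Real.sqrt 2:ℂ))⁻¹ * (3:ℂ)⁻¹ * (((Real.sqrt 2:ℂ))⁻¹ * (3:ℂ)⁻¹)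
        = (((Real.sqrt 2:ℂ))⁻¹ * ((Real.sqrt 2:ℂ))⁻¹) * ((3:ℂ)⁻¹ * (3:ℂ)⁻¹) from by ring, hs2']
    norm_num
  -- key step lemma
  have hkey : ∀ k : ℂ,
      ∑ i : Fin 2, (A i * Q) * (k • M) * (A i * Q)ᴴ = (k * 2⁻¹) • M := by
    intro k
    rw [Fin.sum_univ_two, hB0, hB1, Matrix.conjTranspose_smul, Matrix.conjTranspose_smul,
      hstarc, hCT0, hCT1, smul_mul_smul_comm, smul_mul_smul_comm,
      smul_mul_smul_comm, smul_mul_smul_comm, ← smul_add]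
    have hprod : (!![(0:ℂ),0,0;2,-1,-1;-2,1,1]) * M * !![(0:ℂ),2,-2;0,-1,1;0,-1,1]
        + !![(1:ℂ),1,-2;-1,-1,2;0,0,0] * M * !![(1:ℂ),-1,0;1,-1,0;-2,2,0]
        = (9:ℂ) • M := by
      rw [hM]
      norm_num [Matrix.mul_fin_three, Matrix.smul_of, Matrix.smul_cons, Matrix.smul_empty]
    rw [hprod, smul_smul, show c * k * c * 9 = c * c * (9 * k) from by ring, hcc]
    congr 1
    ring
  -- base: sum of Å i Å iᴴ
  have hbase : ∑ i : Fin 2, (A i * Q) * (A i * Q)ᴴ = (3:ℂ)⁻¹ • M := by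
    rw [Fin.sum_univ_two, hB0, hB1, Matrix.conjTranspose_smul, Matrix.conjTranspose_smul,
      hstarc, hCT0, hCT1, smul_mul_smul_comm, smul_mul_smul_comm, ← smul_add, hcc]
    have hprod : (!![(0:ℂ),0,0;2,-1,-1;-2,1,1]) * !![(0:ℂ),2,-2;0,-1,1;0,-1,1]
        + !![(1:ℂ),1,-2;-1,-1,2;0,0,0] * !![(1:ℂ),-1,0;1,-1,0;-2,2,0]
        = (6:ℂ) • M := by
      rw [hM]
      norm_num [Matrix.mul_fin_three, Matrix.smul_of, Matrix.smul_cons, Matrix.smul_empty]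
    rw [hprod, smul_smul]
    norm_num
  set B : Fin 2 → Matrix (Fin 3) (Fin 3) ℂ := fun i => A i * Q with hBdef
  have main : ∀ m : ℕ,
      ∑ α : Fin (m + 1) → Fin 2, matWord B (m + 1) α * (matWord B (m + 1) α)ᴴ =
        ((3 * 2 ^ m : ℂ))⁻¹ • M := by
    intro m
    induction m with
    | zero =>
      rw [sum_word_rec]
      have h0 : ∑ β : Fin 0 → Fin 2, matWord B 0 β * (matWord B 0 β)ᴴ = 1 := by
        rw [Fintype.sum_subsingleton _ (fun i => Fin.elim0 i)]
        simp [matWord]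
      rw [h0]
      simp only [mul_one]
      rw [hbase]
      norm_num
    | succ m ih =>
      rw [sum_word_rec, ih, hkey]
      congr 1
      rw [pow_succ]
      have h2 : ((2:ℂ) ^ m) ≠ 0 := pow_ne_zero _ two_ne_zero
      field_simp
  have part3 : ∀ n : ℕ, 1 ≤ n →
      ∑ α : Fin n → Fin 2, matWord B n α * (matWord B n α)ᴴ =
        ((3 * 2 ^ (n - 1) : ℂ))⁻¹ • M := by
    intro n hn
    obtain ⟨m, rfl⟩ : ∃ m, n = m + 1 := ⟨n - 1, (Nat.succ_pred_eq_of_pos hn).symm⟩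
    simpa using main m
  refine ⟨part1, part2, part3, ?_⟩
  -- Tendsto
  have hnorm : Filter.Tendsto (fun n : ℕ => ((3 * 2 ^ (n - 1) : ℂ))⁻¹) Filter.atTop (nhds 0) := by
    have h1 : Filter.Tendsto (fun n : ℕ => ((3 * 2 ^ n : ℝ))⁻¹) Filter.atTop (nhds 0) := by
      have : Filter.Tendsto (fun n : ℕ => (3 * 2 ^ n : ℝ)) Filter.atTop Filter.atTop := by
        apply Filter.Tendsto.const_mul_atTop (by norm_num : (0:ℝ) < 3)
        exact tendsto_pow_atTop_atTop_of_one_lt (by norm_num)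
      exact this.inv_tendsto_atTop
    have h2 : Filter.Tendsto (fun n : ℕ => ((3 * 2 ^ (n - 1) : ℝ))⁻¹) Filter.atTop (nhds 0) :=
      h1.comp (Filter.tendsto_sub_atTop_nat 1)
    have h3 := (Complex.continuous_ofReal.tendsto 0).comp h2
    have h4 : (fun n : ℕ => ((3 * 2 ^ (n - 1) : ℂ))⁻¹)
        = Complex.ofReal ∘ (fun n : ℕ => ((3 * 2 ^ (n - 1) : ℝ))⁻¹) := by
      funext n
      simp only [Function.comp]
      push_cast
      ring
    rw [h4]
    simpa using h3
  have htend := hnorm.smul_const M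
  rw [zero_smul] at htend
  apply htend.congr'
  filter_upwards [Filter.eventually_ge_atTop 1] with n hn
  exact (part3 n hn).symm
end
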